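/- Let m ≥ 2 and let D be an SDP design of order m. If B₁, B₂, B₃, B₄ are four distinct blocks with B₁ Δ B₂ Δ B₃ Δ B₄ = ∅, then each of the four triple intersections |B₁∩B₂∩B₃|, |B₁∩B₂∩B₄|, |B₁∩B₃∩B₄|, |B₂∩B₃∩B₄| equals 2^(2m−3) − 2^(m−1), and |B₁ ∩ B₂ ∩ B₃ ∩ B₄| = 2^(2m−3) − 2^(m−1). -/
import Mathlib

open Finset
open scoped symmDiff

/-- A square 2-(v,k,λ) design on the point type `α`: the block family `ℬ` consists of
`v` distinct `k`-subsets, every pair of distinct points lies in exactly `lam` blocks,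
and (as is automatic for square designs) any two distinct blocks meet in `lam` points. -/
def IsSquareDesign {α : Type*} [Fintype α] [DecidableEq α]
    (v k lam : ℕ) (ℬ : Finset (Finset α)) : Prop :=
  Fintype.card α = v ∧ ℬ.card = v ∧ (∀ B ∈ ℬ, B.card = k) ∧
  (∀ p q : α, p ≠ q → (ℬ.filter fun B => p ∈ B ∧ q ∈ B).card = lam) ∧
  (∀ B₁ ∈ ℬ, ∀ B₂ ∈ ℬ, B₁ ≠ B₂ → (B₁ ∩ B₂).card = lam)

/-- An SDP design of order `m`: a square 2-(2^(2m), 2^(2m-1)-2^(m-1), 2^(2m-2)-2^(m-1))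
design in which the symmetric difference of any three distinct blocks is a block or the
complement of a block. -/
def IsSDPDesign {α : Type*} [Fintype α] [DecidableEq α]
    (m : ℕ) (ℬ : Finset (Finset α)) : Prop :=
  IsSquareDesign (2^(2*m)) (2^(2*m-1) - 2^(m-1)) (2^(2*m-2) - 2^(m-1)) ℬ ∧
  ∀ B₁ ∈ ℬ, ∀ B₂ ∈ ℬ, ∀ B₃ ∈ ℬ, B₁ ≠ B₂ → B₁ ≠ B₃ → B₂ ≠ B₃ →
    B₁ ∆ B₂ ∆ B₃ ∈ ℬ ∨ (B₁ ∆ B₂ ∆ B₃)ᶜ ∈ ℬ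

lemma card_symmDiff_aux {α : Type*} [DecidableEq α] (s t : Finset α) :
    (s ∆ t).card + 2 * (s ∩ t).card = s.card + t.card := by
  have h1 : s ∆ t = (s ∪ t) \ (s ∩ t) := by
    ext x; simp [mem_symmDiff]; tauto
  have h2 := Finset.card_union_add_card_inter s t
  have h3 : ((s ∪ t) \ (s ∩ t)).card = (s ∪ t).card - (s ∩ t).card :=
    Finset.card_sdiff_of_subset (Finset.inter_subset_union)
  have h4 : (s ∩ t).card ≤ (s ∪ t).card :=
    Finset.card_le_card Finset.inter_subset_union
  rw [h1, h3]
  omega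

theorem sdp_four_blocks_symmDiff_empty {m : ℕ} (hm : 2 ≤ m)
    {α : Type*} [Fintype α] [DecidableEq α] {ℬ : Finset (Finset α)}
    (hD : IsSDPDesign m ℬ)
    {B₁ B₂ B₃ B₄ : Finset α} (h₁ : B₁ ∈ ℬ) (h₂ : B₂ ∈ ℬ) (h₃ : B₃ ∈ ℬ) (h₄ : B₄ ∈ ℬ)
    (h₁₂ : B₁ ≠ B₂) (h₁₃ : B₁ ≠ B₃) (h₁₄ : B₁ ≠ B₄)
    (h₂₃ : B₂ ≠ B₃) (h₂₄ : B₂ ≠ B₄) (h₃₄ : B₃ ≠ B₄)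
    (hw : B₁ ∆ B₂ ∆ B₃ ∆ B₄ = ∅) :
    (B₁ ∩ B₂ ∩ B₃).card = 2^(2*m-3) - 2^(m-1) ∧
    (B₁ ∩ B₂ ∩ B₄).card = 2^(2*m-3) - 2^(m-1) ∧
    (B₁ ∩ B₃ ∩ B₄).card = 2^(2*m-3) - 2^(m-1) ∧
    (B₂ ∩ B₃ ∩ B₄).card = 2^(2*m-3) - 2^(m-1) ∧
    (B₁ ∩ B₂ ∩ B₃ ∩ B₄).card = 2^(2*m-3) - 2^(m-1) := by
  obtain ⟨⟨hv, hcard, hk, hpts, hlam⟩, hsdp⟩ := hD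
  -- B₄ = B₁ ∆ B₂ ∆ B₃
  have hB4 : B₁ ∆ B₂ ∆ B₃ = B₄ := symmDiff_eq_bot.mp hw
  -- All five intersections are equal as sets
  have e1 : B₁ ∩ B₂ ∩ B₄ = B₁ ∩ B₂ ∩ B₃ := by
    rw [← hB4]; ext x; simp [mem_symmDiff]; tauto
  have e2 : B₁ ∩ B₃ ∩ B₄ = B₁ ∩ B₂ ∩ B₃ := by
    rw [← hB4]; ext x; simp [mem_symmDiff]; tauto
  have e3 : B₂ ∩ B₃ ∩ B₄ = B₁ ∩ B₂ ∩ B₃ := by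
    rw [← hB4]; ext x; simp [mem_symmDiff]; tauto
  have e4 : B₁ ∩ B₂ ∩ B₃ ∩ B₄ = B₁ ∩ B₂ ∩ B₃ := by
    rw [← hB4]; ext x; simp [mem_symmDiff]; tauto
  -- cardinality computation
  set k := 2^(2*m-1) - 2^(m-1) with hkdef
  set lam := 2^(2*m-2) - 2^(m-1) with hlamdef
  have hk1 : B₁.card = k := hk _ h₁
  have hk2 : B₂.card = k := hk _ h₂
  have hk3 : B₃.card = k := hk _ h₃
  have hk4 : B₄.card = k := hk _ h₄
  have hl12 : (B₁ ∩ B₂).card = lam := hlam _ h₁ _ h₂ h₁₂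
  have hl13 : (B₁ ∩ B₃).card = lam := hlam _ h₁ _ h₃ h₁₃
  have hl23 : (B₂ ∩ B₃).card = lam := hlam _ h₂ _ h₃ h₂₃
  have c1 := card_symmDiff_aux B₁ B₂
  have c2 := card_symmDiff_aux (B₁ ∆ B₂) B₃
  have hdist : (B₁ ∆ B₂) ∩ B₃ = (B₁ ∩ B₃) ∆ (B₂ ∩ B₃) := by
    ext x; simp [mem_symmDiff]; tauto
  have c3 := card_symmDiff_aux (B₁ ∩ B₃) (B₂ ∩ B₃)
  have hinter : (B₁ ∩ B₃) ∩ (B₂ ∩ B₃) = B₁ ∩ B₂ ∩ B₃ := by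
    ext x; simp
  rw [hdist] at c2
  rw [hinter] at c3
  rw [hB4] at c2
  rw [hk4, hk3] at c2
  rw [hl13, hl23] at c3
  rw [hk1, hk2, hl12] at c1
  -- now: c2 : k + 2 * ((B₁∩B₃) ∆ (B₂∩B₃)).card = (B₁ ∆ B₂).card + k
  -- c1 : (B₁ ∆ B₂).card + 2 * lam = k + k
  -- c3 : ((B₁∩B₃) ∆ (B₂∩B₃)).card + 2 * (B₁∩B₂∩B₃).card = lam + lam
  -- so 2 * t = 3*lam - k
  obtain ⟨n, rfl⟩ : ∃ n, m = n + 2 := ⟨m - 2, by omega⟩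
  have hm1 : 2*(n+2)-1 = 2*n+3 := by omega
  have hm2 : 2*(n+2)-2 = 2*n+2 := by omega
  have hm3 : 2*(n+2)-3 = 2*n+1 := by omega
  have hmm : (n+2)-1 = n+1 := by omega
  have p1 : (2:ℕ)^(2*n+3) = 8 * (2^n * 2^n) := by ring
  have p2 : (2:ℕ)^(2*n+2) = 4 * (2^n * 2^n) := by ring
  have p3 : (2:ℕ)^(2*n+1) = 2 * (2^n * 2^n) := by ring
  have p4 : (2:ℕ)^(n+1) = 2 * 2^n := by ring
  have hp : 1 ≤ (2:ℕ)^n := Nat.one_le_two_pow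
  have hkval : k = 8 * (2^n * 2^n) - 2 * 2^n := by
    rw [hkdef, hm1, hmm, p1, p4]
  have hlamval : lam = 4 * (2^n * 2^n) - 2 * 2^n := by
    rw [hlamdef, hm2, hmm, p2, p4]
  have htarget : 2^(2*(n+2)-3) - 2^((n+2)-1) = 2 * (2^n * 2^n) - 2 * 2^n := by
    rw [hm3, hmm, p3, p4]
  have hTP : 2^n ≤ 2^n * 2^n := Nat.le_mul_of_pos_left _ (Nat.pos_of_ne_zero (by positivity))
  have ht : (B₁ ∩ B₂ ∩ B₃).card = 2 * (2^n * 2^n) - 2 * 2^n := by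
    rw [hkval] at c1 c2
    rw [hlamval] at c3
    generalize hT : (2:ℕ)^n * 2^n = T at *
    generalize hP : (2:ℕ)^n = P at *
    omega
  refine ⟨?_, ?_, ?_, ?_, ?_⟩ <;>
    simp only [e1, e2, e3, e4, htarget, ht]
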